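/- arXiv:1806.00739 — 2 statements merged into one kernel-verified Lean document; each statement's English description precedes it below -/
import Mathlib

section
/- For any test φ_n and any κ ∈ [0,1], there exists a type-based test φ_n^T (a test whose output depends on (X1^N,X2^N,Y^n) only through the triple of types (T̂_{X1^N}, T̂_{X2^N}, T̂_{Y^n})) such that for every pair of distributions (P1,P2) on X: β1(φ_n|P1,P2) ≥ κ·β1(φ_n^T|P1,P2) and β2(φ_n|P1,P2) ≥ (1−κ)·β2(φ_n^T|P1,P2). -/
open Filter Topology MeasureTheory

namespace Classification

variable {X : Type*} [Fintype X] [DecidableEq X]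

/-- `P` is a probability mass function on the finite alphabet `X`. -/
def IsDist (P : X → ℝ) : Prop := (∀ x, 0 ≤ P x) ∧ ∑ x, P x = 1

/-- `P` has full support. -/
def FullSupport (P : X → ℝ) : Prop := ∀ x, 0 < P x

/-- Empirical distribution (type) of a sequence `x : Fin m → X`. -/
noncomputable def empDist {m : ℕ} (x : Fin m → X) : X → ℝ :=
  fun a => ((Finset.univ.filter fun i => x i = a).card : ℝ) / m

/-- Real-valued KL divergence with the usual `0 · log 0 = 0` convention. -/
noncomputable def klDivR (Q P : X → ℝ) : ℝ := ∑ x, Q x * Real.log (Q x / P x)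

open Classical in
/-- Extended-real-valued KL divergence: `⊤` when `Q` is not absolutely continuous w.r.t. `P`. -/
noncomputable def klDivE (Q P : X → ℝ) : EReal :=
  if ∀ x, P x = 0 → Q x = 0 then ((klDivR Q P : ℝ) : EReal) else ⊤

/-- The mixture `(α P1 + P2) / (1 + α)`. -/
noncomputable def mix (P1 P2 : X → ℝ) (α : ℝ) : X → ℝ :=
  fun x => (α * P1 x + P2 x) / (1 + α)

/-- Generalized Jensen–Shannon divergence
`GJS(P1,P2,α) = α D(P1 ‖ (αP1+P2)/(1+α)) + D(P2 ‖ (αP1+P2)/(1+α))`. -/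
noncomputable def GJS (P1 P2 : X → ℝ) (α : ℝ) : ℝ :=
  α * klDivR P1 (mix P1 P2 α) + klDivR P2 (mix P1 P2 α)

/-- Training sequence length `N = ⌈α n⌉`. -/
noncomputable def trainLen (α : ℝ) (n : ℕ) : ℕ := ⌈α * (n : ℝ)⌉₊

/-- Probability of observing the sequence `x` under i.i.d. sampling from `P`. -/
noncomputable def seqProb (P : X → ℝ) {m : ℕ} (x : Fin m → X) : ℝ := ∏ i, P (x i)

/-- A binary classification test: output `true` means "declare H₂",
`false` means "declare H₁". -/
abbrev BTest (X : Type*) (α : ℝ) (n : ℕ) : Type _ :=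
  (Fin (trainLen α n) → X) → (Fin (trainLen α n) → X) → (Fin n → X) → Bool

/-- Type-I error probability: probability of declaring `H₂` when `Y^n ~ P1` (hypothesis H₁). -/
noncomputable def beta1 {α : ℝ} {n : ℕ} (φ : BTest X α n) (P1 P2 : X → ℝ) : ℝ :=
  ∑ x1 : Fin (trainLen α n) → X, ∑ x2 : Fin (trainLen α n) → X, ∑ y : Fin n → X,
    if φ x1 x2 y = true then seqProb P1 x1 * seqProb P2 x2 * seqProb P1 y else 0

/-- Type-II error probability: probability of declaring `H₁` when `Y^n ~ P2` (hypothesis H₂). -/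
noncomputable def beta2 {α : ℝ} {n : ℕ} (φ : BTest X α n) (P1 P2 : X → ℝ) : ℝ :=
  ∑ x1 : Fin (trainLen α n) → X, ∑ x2 : Fin (trainLen α n) → X, ∑ y : Fin n → X,
    if φ x1 x2 y = false then seqProb P1 x1 * seqProb P2 x2 * seqProb P2 y else 0

open Classical in
/-- Gutman's test with threshold `lam`: declare `H₁` iff `GJS(T̂_{x₁}, T̂_y, α) ≤ lam`. -/
noncomputable def gutman (α lam : ℝ) (n : ℕ) : BTest X α n :=
  fun x1 _ y => if GJS (empDist x1) (empDist y) α ≤ lam then false else true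

open Classical in
/-- `- log x` as an extended real, with `⊤` at `x = 0`. -/
noncomputable def negLogE (x : ℝ) : EReal :=
  if x = 0 then ⊤ else ((-Real.log x : ℝ) : EReal)

/-- Gutman's exponent function
`F(P1,P2,α,lam) = min { α D(Q1‖P1) + D(Q2‖P2) : GJS(Q1,Q2,α) ≤ lam }` (as an inf in `EReal`). -/
noncomputable def Fexp (P1 P2 : X → ℝ) (α lam : ℝ) : EReal :=
  sInf {v : EReal | ∃ Q1 Q2 : X → ℝ, IsDist Q1 ∧ IsDist Q2 ∧ GJS Q1 Q2 α ≤ lam ∧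
    v = (α : EReal) * klDivE Q1 P1 + klDivE Q2 P2}

/-- Expectation of `f` under `P`. -/
noncomputable def expect (P : X → ℝ) (f : X → ℝ) : ℝ := ∑ x, P x * f x

/-- Variance of `f` under `P`. -/
noncomputable def varD (P : X → ℝ) (f : X → ℝ) : ℝ :=
  expect P (fun x => (f x - expect P f) ^ 2)

/-- Information density `ı₁(x) = log((1+α) P1(x) / (α P1(x) + P2(x)))`. -/
noncomputable def iDens1 (P1 P2 : X → ℝ) (α : ℝ) (x : X) : ℝ :=
  Real.log ((1 + α) * P1 x / (α * P1 x + P2 x))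

/-- Information density `ı₂(x) = log((1+α) P2(x) / (α P1(x) + P2(x)))`. -/
noncomputable def iDens2 (P1 P2 : X → ℝ) (α : ℝ) (x : X) : ℝ :=
  Real.log ((1 + α) * P2 x / (α * P1 x + P2 x))

/-- The dispersion `V(P1,P2,α) = α Var_{P1}[ı₁] + Var_{P2}[ı₂]`. -/
noncomputable def disp (P1 P2 : X → ℝ) (α : ℝ) : ℝ :=
  α * varD P1 (iDens1 P1 P2 α) + varD P2 (iDens2 P1 P2 α)

/-- The standard Gaussian cumulative distribution function `Φ`. -/
noncomputable def stdCDF (x : ℝ) : ℝ :=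
  (Real.sqrt (2 * Real.pi))⁻¹ * ∫ t in Set.Iic x, Real.exp (-t ^ 2 / 2)

/-- The inverse standard Gaussian cdf `Φ⁻¹`. -/
noncomputable def stdCDFInv (p : ℝ) : ℝ := sInf {x : ℝ | p ≤ stdCDF x}

/-- The non-asymptotic fundamental limit `λ*(n, α, ε | P1, P2)` for binary classification. -/
noncomputable def lamStar (α : ℝ) (n : ℕ) (ε : ℝ) (P1 P2 : X → ℝ) : ℝ :=
  sSup {lam : ℝ | 0 ≤ lam ∧ ∃ φ : BTest X α n,
    (∀ Q1 Q2 : X → ℝ, IsDist Q1 → IsDist Q2 →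
      beta1 φ Q1 Q2 ≤ Real.exp (-((n : ℝ) * lam))) ∧
    beta2 φ P1 P2 ≤ ε}

/-- Rényi divergence of order `γ`. -/
noncomputable def renyi (γ : ℝ) (P1 P2 : X → ℝ) : ℝ :=
  (1 / (γ - 1)) * Real.log (∑ x, P1 x ^ γ * P2 x ^ (1 - γ))

/-- The fundamental limit `τ*(n, α, ε | φ_n^Gut, P1, P2)` in the dual setting for Gutman's test. -/
noncomputable def tauStarGut (α : ℝ) (n : ℕ) (ε : ℝ) (P1 P2 : X → ℝ) : ℝ :=
  sSup {τ : ℝ | 0 ≤ τ ∧ ∃ lam : ℝ, 0 ≤ lam ∧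
    (∀ Q1 Q2 : X → ℝ, IsDist Q1 → IsDist Q2 →
      beta1 (gutman α lam n) Q1 Q2 ≤ ε) ∧
    beta2 (gutman α lam n) P1 P2 ≤ Real.exp (-((n : ℝ) * τ))}

/-- A two-sample homogeneity test: `true` means "declare H₂" (different distributions). -/
abbrev TTest (X : Type*) (α : ℝ) (n : ℕ) : Type _ :=
  (Fin (trainLen α n) → X) → (Fin n → X) → Bool

/-- False-alarm probability of a two-sample test. -/
noncomputable def betaFA {α : ℝ} {n : ℕ} (φ : TTest X α n) (P1 : X → ℝ) : ℝ :=
  ∑ x : Fin (trainLen α n) → X, ∑ y : Fin n → X,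
    if φ x y = true then seqProb P1 x * seqProb P1 y else 0

/-- Miss-detection probability of a two-sample test. -/
noncomputable def betaMD {α : ℝ} {n : ℕ} (φ : TTest X α n) (P1 P2 : X → ℝ) : ℝ :=
  ∑ x : Fin (trainLen α n) → X, ∑ y : Fin n → X,
    if φ x y = false then seqProb P1 x * seqProb P2 y else 0

/-- The fundamental limit `ξ*(n, α, ε | P1, P2)` for two-sample homogeneity testing. -/
noncomputable def xiStar (α : ℝ) (n : ℕ) (ε : ℝ) (P1 P2 : X → ℝ) : ℝ :=
  sSup {lam : ℝ | 0 ≤ lam ∧ ∃ φ : TTest X α n,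
    (∀ Q1 : X → ℝ, IsDist Q1 → betaFA φ Q1 ≤ Real.exp (-((n : ℝ) * lam))) ∧
    betaMD φ P1 P2 ≤ ε}

/-- An M-ary classification test with the rejection option: `some j` means "declare H_j",
`none` means "reject". -/
abbrev MTest (X : Type*) (M : ℕ) (α : ℝ) (n : ℕ) : Type _ :=
  (Fin M → Fin (trainLen α n) → X) → (Fin n → X) → Option (Fin M)

/-- Type-`j` error probability: probability of declaring some hypothesis other than
`H_j` or rejection, under `H_j`. -/
noncomputable def betaM {M : ℕ} {α : ℝ} {n : ℕ} (ψ : MTest X M α n)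
    (P : Fin M → X → ℝ) (j : Fin M) : ℝ :=
  ∑ xs : Fin M → Fin (trainLen α n) → X, ∑ y : Fin n → X,
    if ψ xs y ≠ some j ∧ ψ xs y ≠ none then
      (∏ i, seqProb (P i) (xs i)) * seqProb (P j) y else 0

/-- Type-`j` rejection probability: probability of rejecting under `H_j`. -/
noncomputable def zetaM {M : ℕ} {α : ℝ} {n : ℕ} (ψ : MTest X M α n)
    (P : Fin M → X → ℝ) (j : Fin M) : ℝ :=
  ∑ xs : Fin M → Fin (trainLen α n) → X, ∑ y : Fin n → X,
    if ψ xs y = none then (∏ i, seqProb (P i) (xs i)) * seqProb (P j) y else 0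

/-- The fundamental limit `λ*(n, α, ε | P)` for M-ary classification with rejection. -/
noncomputable def lamStarM (M : ℕ) (α : ℝ) (n : ℕ) (ε : Fin M → ℝ)
    (P : Fin M → X → ℝ) : ℝ :=
  sSup {lam : ℝ | 0 ≤ lam ∧ ∃ ψ : MTest X M α n,
    (∀ Q : Fin M → X → ℝ, (∀ i, IsDist (Q i)) → ∀ j,
      betaM ψ Q j ≤ Real.exp (-((n : ℝ) * lam))) ∧
    (∀ j, zetaM ψ P j ≤ ε j)}

open Classical in
/-- Gutman's M-ary test with rejection and threshold `lam`. -/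
noncomputable def gutmanM (M : ℕ) [NeZero M] (α lam : ℝ) (n : ℕ) : MTest X M α n :=
  fun xs y =>
    if ∃ i k : Fin M, i ≠ k ∧ GJS (empDist (xs i)) (empDist y) α ≤ lam ∧
        GJS (empDist (xs k)) (empDist y) α ≤ lam then none
    else if h : ∃ j : Fin M, GJS (empDist (xs j)) (empDist y) α ≤ lam then some h.choose
    else some 0

/-- The fundamental limit `τ*(n, α, ε | Ψ_n^Gut, P)` in the dual setting for
Gutman's M-ary test. -/
noncomputable def tauStarGutM (M : ℕ) [NeZero M] (α : ℝ) (n : ℕ) (ε : ℝ)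
    (P : Fin M → X → ℝ) : ℝ :=
  sSup {τ : ℝ | 0 ≤ τ ∧ ∃ lam : ℝ, 0 ≤ lam ∧
    (∀ Q : Fin M → X → ℝ, (∀ i, IsDist (Q i)) → ∀ j,
      betaM (gutmanM M α lam n) Q j ≤ ε) ∧
    (∀ j, zetaM (gutmanM M α lam n) P j ≤ Real.exp (-((n : ℝ) * τ)))}

/-- Generalized divergence of three distributions
`D_γ(P1,P2,P3) = (γ-1)⁻¹ log Σ_x P1(x)^{1-γ} P2(x)^{γ/2} P3(x)^{γ/2}`. -/
noncomputable def genDiv (γ : ℝ) (P1 P2 P3 : X → ℝ) : ℝ :=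
  (1 / (γ - 1)) * Real.log (∑ x, P1 x ^ (1 - γ) * P2 x ^ (γ / 2) * P3 x ^ (γ / 2))

/-- A binary classification test with the rejection option: `some 0` means "declare H₁",
`some 1` means "declare H₂", `none` means "reject". -/
abbrev RTest (X : Type*) (α : ℝ) (n : ℕ) : Type _ :=
  (Fin (trainLen α n) → X) → (Fin (trainLen α n) → X) → (Fin n → X) → Option (Fin 2)

/-- Type-1 error probability of a rejection test: declare `H₂` under `H₁`. -/
noncomputable def beta1R {α : ℝ} {n : ℕ} (ψ : RTest X α n) (P1 P2 : X → ℝ) : ℝ :=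
  ∑ x1 : Fin (trainLen α n) → X, ∑ x2 : Fin (trainLen α n) → X, ∑ y : Fin n → X,
    if ψ x1 x2 y = some 1 then seqProb P1 x1 * seqProb P2 x2 * seqProb P1 y else 0

/-- Type-2 error probability of a rejection test: declare `H₁` under `H₂`. -/
noncomputable def beta2R {α : ℝ} {n : ℕ} (ψ : RTest X α n) (P1 P2 : X → ℝ) : ℝ :=
  ∑ x1 : Fin (trainLen α n) → X, ∑ x2 : Fin (trainLen α n) → X, ∑ y : Fin n → X,
    if ψ x1 x2 y = some 0 then seqProb P1 x1 * seqProb P2 x2 * seqProb P2 y else 0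

open Classical in
/-- Type-`j` rejection probability of a binary rejection test. -/
noncomputable def zetaR {α : ℝ} {n : ℕ} (ψ : RTest X α n) (P1 P2 : X → ℝ) (j : Fin 2) : ℝ :=
  ∑ x1 : Fin (trainLen α n) → X, ∑ x2 : Fin (trainLen α n) → X, ∑ y : Fin n → X,
    if ψ x1 x2 y = none then
      seqProb P1 x1 * seqProb P2 x2 * seqProb (if j = 0 then P1 else P2) y else 0

/-- A binary test is type-based if it depends on the data only through the
triple of empirical distributions. -/
def TypeBasedB {α : ℝ} {n : ℕ} (φ : BTest X α n) : Prop :=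
  ∀ x1 x1' x2 x2' : Fin (trainLen α n) → X, ∀ y y' : Fin n → X,
    empDist x1 = empDist x1' → empDist x2 = empDist x2' → empDist y = empDist y' →
      φ x1 x2 y = φ x1' x2' y'

/-- An M-ary test is type-based if it depends on the data only through the
tuple of empirical distributions. -/
def TypeBasedM {M : ℕ} {α : ℝ} {n : ℕ} (ψ : MTest X M α n) : Prop :=
  ∀ xs xs' : Fin M → Fin (trainLen α n) → X, ∀ y y' : Fin n → X,
    (∀ i, empDist (xs i) = empDist (xs' i)) → empDist y = empDist y' →
      ψ xs y = ψ xs' y'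

open Classical in
/-- Probability of an event under hypothesis `H₂` in the binary setup. -/
noncomputable def prH2E (α : ℝ) (n : ℕ) (P1 P2 : X → ℝ)
    (E : (Fin (trainLen α n) → X) → (Fin (trainLen α n) → X) → (Fin n → X) → Prop) : ℝ :=
  ∑ x1 : Fin (trainLen α n) → X, ∑ x2 : Fin (trainLen α n) → X, ∑ y : Fin n → X,
    if E x1 x2 y then seqProb P1 x1 * seqProb P2 x2 * seqProb P2 y else 0

open Classical in
/-- Probability of an event under hypothesis `H_j` in the M-ary setup. -/
noncomputable def prHjM (M : ℕ) (α : ℝ) (n : ℕ) (P : Fin M → X → ℝ) (j : Fin M)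
    (E : (Fin M → Fin (trainLen α n) → X) → (Fin n → X) → Prop) : ℝ :=
  ∑ xs : Fin M → Fin (trainLen α n) → X, ∑ y : Fin n → X,
    if E xs y then (∏ i, seqProb (P i) (xs i)) * seqProb (P j) y else 0

/-- `η_n(α) = |X| log(n+1)/n + 2|X| log(1+αn)/(αn)`. -/
noncomputable def etaN (X : Type*) [Fintype X] (α : ℝ) (n : ℕ) : ℝ :=
  (Fintype.card X : ℝ) * Real.log ((n : ℝ) + 1) / n +
    2 * (Fintype.card X : ℝ) * Real.log (1 + α * n) / (α * n)

/-- `η_{n,M} = M |X| log(nα+1)/(nα) + |X| log(n+1)/n`. -/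
noncomputable def etaNM (X : Type*) [Fintype X] (M : ℕ) (α : ℝ) (n : ℕ) : ℝ :=
  (M : ℝ) * (Fintype.card X : ℝ) * Real.log ((n : ℝ) * α + 1) / ((n : ℝ) * α) +
    (Fintype.card X : ℝ) * Real.log ((n : ℝ) + 1) / n

/-- `Q` is an `m`-type: the empirical distribution of some sequence of length `m`. -/
def IsTypeDist (m : ℕ) (Q : X → ℝ) : Prop := ∃ x : Fin m → X, empDist x = Q

/-- The type-restricted exponent function `F_n`. -/
noncomputable def Fn (n : ℕ) (P1 P2 : X → ℝ) (α lam : ℝ) : ℝ :=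
  sInf {v : ℝ | ∃ Q1 Q2 : X → ℝ, IsTypeDist (trainLen α n) Q1 ∧ IsTypeDist n Q2 ∧
    GJS Q1 Q2 α ≤ lam ∧ v = α * klDivR Q1 P1 + klDivR Q2 P2}

/-- The second smallest value of a finite family of reals:
`min_{i ≠ j} max (v i) (v j)`. -/
noncomputable def secondMin {M : ℕ} (v : Fin M → ℝ) : ℝ :=
  sInf {t : ℝ | ∃ i j : Fin M, i ≠ j ∧ t = max (v i) (v j)}

/-- The tilted distribution `P^{(γ)}` with `γ = α/(1+α)`. -/
noncomputable def tilt (α : ℝ) (P1 P2 : X → ℝ) : X → ℝ :=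
  fun x => P1 x ^ (α / (1 + α)) * P2 x ^ (1 / (1 + α)) /
    ∑ a, P1 a ^ (α / (1 + α)) * P2 a ^ (1 / (1 + α))


section TypeBasedAux

variable {X : Type*} [Fintype X] [DecidableEq X]

lemma seqProb_eq_prod {m : ℕ} (P : X → ℝ) (x : Fin m → X) :
    seqProb P x = ∏ a, P a ^ (Finset.univ.filter fun i => x i = a).card := by
  rw [seqProb, ← Finset.prod_fiberwise_of_maps_to (fun i _ => Finset.mem_univ (x i))
    (fun i => P (x i))]
  refine Finset.prod_congr rfl fun a _ => ?_
  calc (∏ i ∈ Finset.univ.filter fun i => x i = a, P (x i))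
      = ∏ _i ∈ Finset.univ.filter fun i => x i = a, P a :=
        Finset.prod_congr rfl fun i hi => by rw [(Finset.mem_filter.mp hi).2]
    _ = _ := Finset.prod_const _

omit [Fintype X] [DecidableEq X] in
lemma seqProb_nonneg {m : ℕ} {P : X → ℝ} (hP : ∀ a, 0 ≤ P a) (x : Fin m → X) :
    0 ≤ seqProb P x := Finset.prod_nonneg fun i _ => hP _

lemma seqProb_eq_of_empDist_eq {m : ℕ} (P : X → ℝ) {x x' : Fin m → X}
    (h : empDist x = empDist x') : seqProb P x = seqProb P x' := by
  rcases Nat.eq_zero_or_pos m with hm | hm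
  · subst hm; rw [Subsingleton.elim x x']
  · have hc : ∀ a, (Finset.univ.filter fun i => x i = a).card
        = (Finset.univ.filter fun i => x' i = a).card := by
      intro a
      have h1 := congrFun h a
      simp only [empDist] at h1
      have hm' : (m : ℝ) ≠ 0 := by positivity
      field_simp at h1
      exact_mod_cast h1
    rw [seqProb_eq_prod, seqProb_eq_prod]
    exact Finset.prod_congr rfl fun a _ => by rw [hc a]

open Classical in
lemma fiber_sum_le {T K : Type*} [Fintype T] [DecidableEq K] (key : T → K) (κ : ℝ)
    (w : T → ℝ) (hw : ∀ t, 0 ≤ w t) (hwk : ∀ s t, key s = key t → w s = w t)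
    (b c : T → Bool) (hck : ∀ s t, key s = key t → c s = c t)
    (hcb : ∀ t, c t = true →
      κ * ((Finset.univ.filter fun s => key s = key t).card : ℝ) ≤
        (((Finset.univ.filter fun s => key s = key t).filter fun s => b s = true).card : ℝ)) :
    κ * ∑ t, (if c t = true then w t else 0) ≤ ∑ t, (if b t = true then w t else 0) := by
  rw [Finset.mul_sum]
  rw [← Finset.sum_fiberwise_of_maps_to (g := key)
    (fun t _ => Finset.mem_image_of_mem key (Finset.mem_univ t))
    (fun t => κ * if c t = true then w t else 0)]
  rw [← Finset.sum_fiberwise_of_maps_to (g := key)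
    (fun t _ => Finset.mem_image_of_mem key (Finset.mem_univ t))
    (fun t => if b t = true then w t else 0)]
  refine Finset.sum_le_sum fun k hk => ?_
  obtain ⟨t₀, -, rfl⟩ := Finset.mem_image.mp hk
  set F := Finset.univ.filter fun s => key s = key t₀ with hF
  have hmemF : ∀ s ∈ F, key s = key t₀ := fun s hs => (Finset.mem_filter.mp hs).2
  have hL : (∑ t ∈ F, (κ * if c t = true then w t else 0))
      = F.card * (κ * if c t₀ = true then w t₀ else 0) := by
    rw [Finset.sum_congr rfl fun t ht => by
      rw [hck t t₀ (hmemF t ht), hwk t t₀ (hmemF t ht)]]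
    rw [Finset.sum_const, nsmul_eq_mul]
  have hR : (∑ t ∈ F, (if b t = true then w t else 0))
      = (F.filter fun s => b s = true).card * w t₀ := by
    rw [Finset.sum_congr rfl fun t ht => by rw [hwk t t₀ (hmemF t ht)]]
    rw [← Finset.sum_filter, Finset.sum_const, nsmul_eq_mul]
  rw [hL, hR]
  by_cases hc0 : c t₀ = true
  · rw [if_pos hc0]
    calc (F.card : ℝ) * (κ * w t₀) = (κ * F.card) * w t₀ := by ring
      _ ≤ (F.filter fun s => b s = true).card * w t₀ :=
        mul_le_mul_of_nonneg_right (hcb t₀ hc0) (hw t₀)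
  · rw [if_neg hc0]
    simp only [mul_zero]
    exact mul_nonneg (Nat.cast_nonneg _) (hw t₀)

set_option maxHeartbeats 2000000 in
lemma beta1_eq_sum {α : ℝ} {n : ℕ} (φ : BTest X α n) (P1 P2 : X → ℝ) :
    beta1 φ P1 P2 = ∑ t : (Fin (trainLen α n) → X) × (Fin (trainLen α n) → X) × (Fin n → X),
      (if φ t.1 t.2.1 t.2.2 = true then
        seqProb P1 t.1 * seqProb P2 t.2.1 * seqProb P1 t.2.2 else 0) := by
  simp only [beta1]
  rw [Fintype.sum_prod_type]
  refine Finset.sum_congr rfl fun x1 _ => ?_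
  rw [Fintype.sum_prod_type]

set_option maxHeartbeats 2000000 in
lemma beta2_eq_sum {α : ℝ} {n : ℕ} (φ : BTest X α n) (P1 P2 : X → ℝ) :
    beta2 φ P1 P2 = ∑ t : (Fin (trainLen α n) → X) × (Fin (trainLen α n) → X) × (Fin n → X),
      (if φ t.1 t.2.1 t.2.2 = false then
        seqProb P1 t.1 * seqProb P2 t.2.1 * seqProb P2 t.2.2 else 0) := by
  simp only [beta2]
  rw [Fintype.sum_prod_type]
  refine Finset.sum_congr rfl fun x1 _ => ?_
  rw [Fintype.sum_prod_type]

end TypeBasedAux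

/-- Lemma 1 of the paper: for any test `φ_n` and any `κ ∈ [0,1]`
there is a type-based test `φ_n^T` with `β₁(φ_n) ≥ κ β₁(φ_n^T)` and
`β₂(φ_n) ≥ (1-κ) β₂(φ_n^T)` for every pair of distributions. -/
theorem exists_type_based_test {X : Type*} [Fintype X] [DecidableEq X]
    (α : ℝ) (hα : 0 < α) (n : ℕ) (φ : BTest X α n)
    (κ : ℝ) (hκ : κ ∈ Set.Icc (0 : ℝ) 1) :
    ∃ φT : BTest X α n, TypeBasedB φT ∧
      ∀ P1 P2 : X → ℝ, IsDist P1 → IsDist P2 →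
        κ * beta1 φT P1 P2 ≤ beta1 φ P1 P2 ∧
        (1 - κ) * beta2 φT P1 P2 ≤ beta2 φ P1 P2 := by
  classical
  obtain ⟨hκ0, hκ1⟩ := hκ
  let T := (Fin (trainLen α n) → X) × (Fin (trainLen α n) → X) × (Fin n → X)
  let key : T → (X → ℝ) × (X → ℝ) × (X → ℝ) :=
    fun t => (empDist t.1, empDist t.2.1, empDist t.2.2)
  let ψ : ((X → ℝ) × (X → ℝ) × (X → ℝ)) → Bool := fun k =>
    decide (κ * ((Finset.univ.filter fun s : T => key s = k).card : ℝ) ≤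
      (((Finset.univ.filter fun s : T => key s = k).filter
        fun s => φ s.1 s.2.1 s.2.2 = true).card : ℝ))
  let φT : BTest X α n := fun x1 x2 y => ψ (empDist x1, empDist x2, empDist y)
  have hck : ∀ s t : T, key s = key t → φT s.1 s.2.1 s.2.2 = φT t.1 t.2.1 t.2.2 :=
    fun s t h => congrArg ψ h
  have hckn : ∀ s t : T, key s = key t →
      (!(φT s.1 s.2.1 s.2.2)) = (!(φT t.1 t.2.1 t.2.2)) :=
    fun s t h => by rw [hck s t h]
  refine ⟨φT, ?_, ?_⟩
  · intro x1 x1' x2 x2' y y' h1 h2 h3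
    show ψ _ = ψ _
    rw [h1, h2, h3]
  · intro P1 P2 hP1 hP2
    have hw1 : ∀ t : T, 0 ≤ seqProb P1 t.1 * seqProb P2 t.2.1 * seqProb P1 t.2.2 :=
      fun t => mul_nonneg (mul_nonneg (seqProb_nonneg hP1.1 _) (seqProb_nonneg hP2.1 _))
        (seqProb_nonneg hP1.1 _)
    have hw2 : ∀ t : T, 0 ≤ seqProb P1 t.1 * seqProb P2 t.2.1 * seqProb P2 t.2.2 :=
      fun t => mul_nonneg (mul_nonneg (seqProb_nonneg hP1.1 _) (seqProb_nonneg hP2.1 _))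
        (seqProb_nonneg hP2.1 _)
    have hkc : ∀ s t : T, key s = key t →
        empDist s.1 = empDist t.1 ∧ empDist s.2.1 = empDist t.2.1 ∧
          empDist s.2.2 = empDist t.2.2 := by
      intro s t h
      exact ⟨congrArg (fun k => k.1) h, congrArg (fun k => k.2.1) h,
        congrArg (fun k => k.2.2) h⟩
    have hwk1 : ∀ s t : T, key s = key t →
        seqProb P1 s.1 * seqProb P2 s.2.1 * seqProb P1 s.2.2
          = seqProb P1 t.1 * seqProb P2 t.2.1 * seqProb P1 t.2.2 := by
      intro s t h
      obtain ⟨h1, h2, h3⟩ := hkc s t h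
      rw [seqProb_eq_of_empDist_eq P1 h1, seqProb_eq_of_empDist_eq P2 h2,
        seqProb_eq_of_empDist_eq P1 h3]
    have hwk2 : ∀ s t : T, key s = key t →
        seqProb P1 s.1 * seqProb P2 s.2.1 * seqProb P2 s.2.2
          = seqProb P1 t.1 * seqProb P2 t.2.1 * seqProb P2 t.2.2 := by
      intro s t h
      obtain ⟨h1, h2, h3⟩ := hkc s t h
      rw [seqProb_eq_of_empDist_eq P1 h1, seqProb_eq_of_empDist_eq P2 h2,
        seqProb_eq_of_empDist_eq P2 h3]
    constructor
    · have e1 : beta1 φ P1 P2 = ∑ t : T,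
          (if φ t.1 t.2.1 t.2.2 = true then
            seqProb P1 t.1 * seqProb P2 t.2.1 * seqProb P1 t.2.2 else 0) :=
        beta1_eq_sum φ P1 P2
      have e2 : beta1 φT P1 P2 = ∑ t : T,
          (if φT t.1 t.2.1 t.2.2 = true then
            seqProb P1 t.1 * seqProb P2 t.2.1 * seqProb P1 t.2.2 else 0) :=
        beta1_eq_sum φT P1 P2
      rw [e1, e2]
      refine fiber_sum_le key κ _ hw1 hwk1 (fun t => φ t.1 t.2.1 t.2.2)
        (fun t => φT t.1 t.2.1 t.2.2) hck ?_
      intro t ht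
      exact of_decide_eq_true ht
    · have ebool : ∀ (g : Bool) (r : ℝ),
          (if g = false then r else 0) = (if (!g) = true then r else 0) := by
        intro g r; cases g <;> simp
      have e1 : beta2 φ P1 P2 = ∑ t : T,
          (if (!(φ t.1 t.2.1 t.2.2)) = true then
            seqProb P1 t.1 * seqProb P2 t.2.1 * seqProb P2 t.2.2 else 0) :=
        (beta2_eq_sum φ P1 P2).trans (Finset.sum_congr rfl fun t _ => ebool _ _)
      have e2 : beta2 φT P1 P2 = ∑ t : T,
          (if (!(φT t.1 t.2.1 t.2.2)) = true then
            seqProb P1 t.1 * seqProb P2 t.2.1 * seqProb P2 t.2.2 else 0) :=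
        (beta2_eq_sum φT P1 P2).trans (Finset.sum_congr rfl fun t _ => ebool _ _)
      rw [e1, e2]
      refine fiber_sum_le key (1 - κ) _ hw2 hwk2 (fun t => !(φ t.1 t.2.1 t.2.2))
        (fun t => !(φT t.1 t.2.1 t.2.2)) hckn ?_
      intro t ht
      have h0 : φT t.1 t.2.1 t.2.2 = false := by
        have ht' : (!(φT t.1 t.2.1 t.2.2)) = true := ht
        simpa using ht'
      have h1 : ¬ (κ * ((Finset.univ.filter fun s : T => key s = key t).card : ℝ) ≤
          (((Finset.univ.filter fun s : T => key s = key t).filter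
            fun s => φ s.1 s.2.1 s.2.2 = true).card : ℝ)) := of_decide_eq_false h0
      have h2 := not_le.mp h1
      set F := Finset.univ.filter fun s : T => key s = key t with hFdef
      have hsplit : (F.filter fun s => φ s.1 s.2.1 s.2.2 = true).card
          + (F.filter fun s => ¬ (φ s.1 s.2.1 s.2.2 = true)).card = F.card :=
        Finset.card_filter_add_card_filter_not _
      have hfeq : (F.filter fun s => ¬ (φ s.1 s.2.1 s.2.2 = true))
          = F.filter fun s => (!(φ s.1 s.2.1 s.2.2)) = true :=
        Finset.filter_congr fun s _ => by simp
      rw [hfeq] at hsplit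
      have hcast : ((F.filter fun s => φ s.1 s.2.1 s.2.2 = true).card : ℝ)
          + ((F.filter fun s => (!(φ s.1 s.2.1 s.2.2)) = true).card : ℝ) = (F.card : ℝ) := by
        exact_mod_cast congrArg (Nat.cast : ℕ → ℝ) hsplit
      nlinarith [Nat.cast_nonneg (α := ℝ) F.card]


end Classification
end

section
/- For any α > 0 and any distributions P_j, P_i, P_k with full support on a finite alphabet X: min_{Q a distribution on X} [ D(Q‖P_j) + α·D(Q‖P_i) + α·D(Q‖P_k) ] = D_{2α/(1+2α)}(P_j,P_i,P_k), where D denotes the Kullback–Leibler divergence. -/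
open Filter Topology MeasureTheory

namespace Classification

variable {X : Type*} [Fintype X] [DecidableEq X]

/-!
With `γ = 2α/(1+2α)` the exponents `1-γ, γ/2, γ/2` are the weights `1, α, α` divided by `1+2α`,
so the objective equals `(1+2α) D(Q‖g)` for the unnormalized geometric mixture
`g = P_j^{1-γ} P_i^{γ/2} P_k^{γ/2}`. Over distributions `Q`, `D(Q‖g) ≥ -log Σ g` with equality at
`Q = g / Σ g` (Gibbs), and `(1+2α)(-log Σ g)` is exactly `D_γ(P_j,P_i,P_k)`.
-/

section

open Real

variable {ι κ : Type*} [Fintype ι] [Fintype κ]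

theorem IsDist.nonempty {P : ι → ℝ} (hP : IsDist P) : Nonempty ι :=
  Finset.univ_nonempty_iff.mp <| Finset.nonempty_of_sum_ne_zero (hP.2 ▸ one_ne_zero)

theorem sub_le_mul_log_div {q p : ℝ} (hq : 0 ≤ q) (hp : 0 < p) : q - p ≤ q * log (q / p) := by
  have h : p * InformationTheory.klFun (q / p) = q * log (q / p) + p - q := by
    rw [InformationTheory.klFun_apply]; field_simp
  nlinarith [mul_nonneg hp.le (InformationTheory.klFun_nonneg (div_nonneg hq hp.le))]

theorem sum_sub_sum_le_klDivR {Q P : ι → ℝ} (hQ : ∀ x, 0 ≤ Q x) (hP : ∀ x, 0 < P x) :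
    ∑ x, Q x - ∑ x, P x ≤ klDivR Q P := by
  rw [← Finset.sum_sub_distrib]
  exact Finset.sum_le_sum fun x _ => sub_le_mul_log_div (hQ x) (hP x)

theorem klDivR_const_mul_right (Q P : ι → ℝ) {c : ℝ} (hc : c ≠ 0) (hP : ∀ x, P x ≠ 0) :
    klDivR Q (fun x => c * P x) = klDivR Q P - (∑ x, Q x) * log c := by
  rw [klDivR, klDivR, Finset.sum_mul, ← Finset.sum_sub_distrib]
  refine Finset.sum_congr rfl fun x _ => ?_
  rcases eq_or_ne (Q x) 0 with hQ | hQ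
  · simp [hQ]
  · rw [mul_comm c, ← div_div, log_div (div_ne_zero hQ (hP x)) hc]
    ring

theorem neg_log_sum_le_klDivR {Q P : ι → ℝ} (hQ : IsDist Q) (hP : ∀ x, 0 < P x) :
    -log (∑ x, P x) ≤ klDivR Q P := by
  have hZ : 0 < ∑ x, P x :=
    Finset.sum_pos (fun x _ => hP x) (Finset.univ_nonempty_iff.mpr hQ.nonempty)
  have h := sum_sub_sum_le_klDivR hQ.1 fun x => mul_pos (inv_pos.mpr hZ) (hP x)
  rw [klDivR_const_mul_right Q P (inv_ne_zero hZ.ne') fun x => (hP x).ne', ← Finset.mul_sum,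
    inv_mul_cancel₀ hZ.ne', hQ.2, log_inv] at h
  linarith

theorem klDivR_div_sum_self {P : ι → ℝ} (hP : ∀ x, 0 < P x) :
    klDivR (fun x => P x / ∑ y, P y) P = -log (∑ x, P x) := by
  have hterm : ∀ x, P x / (∑ y, P y) / P x = (∑ y, P y)⁻¹ := fun x => by
    field_simp [(hP x).ne']
  simp only [klDivR, hterm, ← Finset.sum_mul, ← Finset.sum_div, log_inv]
  rcases eq_or_ne (∑ y, P y) 0 with hZ | hZ
  · simp [hZ]
  · rw [div_self hZ, one_mul]

theorem isLeast_klDivR [Nonempty ι] {P : ι → ℝ} (hP : ∀ x, 0 < P x) :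
    IsLeast {v | ∃ Q, IsDist Q ∧ v = klDivR Q P} (-log (∑ x, P x)) := by
  have hZ : 0 < ∑ x, P x := Finset.sum_pos (fun x _ => hP x) Finset.univ_nonempty
  refine ⟨⟨fun x => P x / ∑ y, P y, ⟨fun x => (div_pos (hP x) hZ).le, ?_⟩,
    (klDivR_div_sum_self hP).symm⟩, ?_⟩
  · rw [← Finset.sum_div, div_self hZ.ne']
  · rintro _ ⟨Q, hQ, rfl⟩
    exact neg_log_sum_le_klDivR hQ hP

theorem sum_mul_klDivR_eq_klDivR_prod_rpow (θ : κ → ℝ) (hθ : ∑ m, θ m = 1) {P : κ → ι → ℝ}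
    (hP : ∀ m x, 0 < P m x) (Q : ι → ℝ) :
    ∑ m, θ m * klDivR Q (P m) = klDivR Q (fun x => ∏ m, P m x ^ θ m) := by
  simp only [klDivR, Finset.mul_sum]
  rw [Finset.sum_comm]
  refine Finset.sum_congr rfl fun x _ => ?_
  rcases eq_or_ne (Q x) 0 with hQ | hQ
  · simp [hQ]
  have hprod : ∏ m, P m x ^ θ m ≠ 0 :=
    Finset.prod_ne_zero_iff.mpr fun m _ => (rpow_pos_of_pos (hP m x) _).ne'
  simp only [log_div hQ (hP _ x).ne', log_div hQ hprod,
    log_prod fun m _ => (rpow_pos_of_pos (hP m x) (θ m)).ne', log_rpow (hP _ x)]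
  calc ∑ m, θ m * (Q x * (log (Q x) - log (P m x)))
      = (∑ m, θ m) * (Q x * log (Q x)) - Q x * ∑ m, θ m * log (P m x) := by
        rw [Finset.sum_mul, Finset.mul_sum, ← Finset.sum_sub_distrib]
        exact Finset.sum_congr rfl fun m _ => by ring
    _ = Q x * (log (Q x) - ∑ m, θ m * log (P m x)) := by rw [hθ]; ring

end

theorem min_klDiv_eq_genDiv_general {X : Type*} [Fintype X]
    (α : ℝ) (hα : 0 < α)
    (Pj Pi Pk : X → ℝ) (hj : IsDist Pj)
    (hsj : FullSupport Pj) (hsi : FullSupport Pi) (hsk : FullSupport Pk) :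
    IsLeast {v : ℝ | ∃ Q : X → ℝ, IsDist Q ∧
        v = klDivR Q Pj + α * klDivR Q Pi + α * klDivR Q Pk}
      (genDiv (2 * α / (1 + 2 * α)) Pj Pi Pk) := by
  have := hj.nonempty
  have hc : 0 < 1 + 2 * α := by linarith
  set γ := 2 * α / (1 + 2 * α) with hγ
  have hγj : (1 + 2 * α) * (1 - γ) = 1 := by rw [hγ]; field_simp; ring
  have hγi : (1 + 2 * α) * (γ / 2) = α := by rw [hγ]; field_simp
  set g : X → ℝ := fun x => Pj x ^ (1 - γ) * Pi x ^ (γ / 2) * Pk x ^ (γ / 2) with hg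
  have hgpos : ∀ x, 0 < g x := fun x => by
    have := hsj x; have := hsi x; have := hsk x; positivity
  have hobjective : ∀ Q : X → ℝ, klDivR Q Pj + α * klDivR Q Pi + α * klDivR Q Pk =
      (1 + 2 * α) * klDivR Q g := fun Q => by
    have h := sum_mul_klDivR_eq_klDivR_prod_rpow ![1 - γ, γ / 2, γ / 2]
      (by simp [Fin.sum_univ_three]; ring) (P := ![Pj, Pi, Pk])
      (by simpa [Fin.forall_fin_succ] using ⟨hsj, hsi, hsk⟩) Q
    simp only [Fin.sum_univ_three, Fin.prod_univ_three, Matrix.cons_val_zero,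
      Matrix.cons_val_one, Matrix.cons_val_two, Matrix.tail_cons, Matrix.head_cons] at h
    rw [← hg] at h
    linear_combination (1 + 2 * α) * h - klDivR Q Pj * hγj - (klDivR Q Pi + klDivR Q Pk) * hγi
  have hgenDiv : genDiv γ Pj Pi Pk = (1 + 2 * α) * -Real.log (∑ x, g x) := by
    have hinv : 1 / (γ - 1) = -(1 + 2 * α) := by rw [hγ]; field_simp; ring
    rw [genDiv, hinv]
    ring
  obtain ⟨⟨R, hR, hRval⟩, hlower⟩ := isLeast_klDivR hgpos
  rw [hgenDiv]
  refine ⟨⟨R, hR, by rw [hobjective, hRval]⟩, ?_⟩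
  rintro _ ⟨Q, hQ, rfl⟩
  rw [hobjective]
  exact mul_le_mul_of_nonneg_left (hlower ⟨Q, hQ, rfl⟩) hc.le

/-- the minimization identity behind Proposition 2:
`min_Q [D(Q‖P_j) + α D(Q‖P_i) + α D(Q‖P_k)] = D_{2α/(1+2α)}(P_j,P_i,P_k)`. -/
theorem min_klDiv_eq_genDiv {X : Type*} [Fintype X] [DecidableEq X]
    (α : ℝ) (hα : 0 < α)
    (Pj Pi Pk : X → ℝ) (hj : IsDist Pj) (hi : IsDist Pi) (hk : IsDist Pk)
    (hsj : FullSupport Pj) (hsi : FullSupport Pi) (hsk : FullSupport Pk) :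
    IsLeast {v : ℝ | ∃ Q : X → ℝ, IsDist Q ∧
        v = klDivR Q Pj + α * klDivR Q Pi + α * klDivR Q Pk}
      (genDiv (2 * α / (1 + 2 * α)) Pj Pi Pk) :=
  min_klDiv_eq_genDiv_general α hα Pj Pi Pk hj hsj hsi hsk

end Classification
end
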